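/- Let k ≥ 1, let G = (V,E) be a k-colorable chordal graph, and let T be a clique of G such that (G,T) can be obtained from (G₁,T) and (G₂,T) by a join operation. If one of C^c_k(G₁,T) and C^c_k(G₂,T) is an (m,k)-color-complete graph (with m = |T|), then C^c_k(G,T) equals the other graph (up to label-preserving isomorphism). If both C^c_k(G₁,T) and C^c_k(G₂,T) are forests satisfying the injective neighborhood property, then C^c_k(G,T) is a forest satisfying the injective neighborhood property. -/

import Mathlib

open SimpleGraph

/-- A proper `k`-coloring of a graph. -/
def IsColoring {W : Type*} (G : SimpleGraph W) (k : ℕ) (α : W → Fin k) : Prop :=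
  ∀ u v : W, G.Adj u v → α u ≠ α v

/-- The `k`-color graph `C_k(G)`: nodes are proper `k`-colorings of `G`,
two colorings being adjacent iff they differ on exactly one vertex. -/
def colorGraph {W : Type*} (G : SimpleGraph W) (k : ℕ) :
    SimpleGraph {α : W → Fin k // IsColoring G k α} where
  Adj α β := ∃! w, α.1 w ≠ β.1 w
  symm := ⟨by
    rintro α β ⟨w, hw, hu⟩
    exact ⟨w, hw.symm, fun u hu' => hu u hu'.symm⟩⟩
  loopless := ⟨by
    rintro α ⟨w, hw, -⟩
    exact hw rfl⟩

/-- The subgraph of a labeled graph consisting of the edges between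
equally labeled nodes. -/
def sameLabelSub {N L : Type*} (H : SimpleGraph N) (f : N → L) : SimpleGraph N where
  Adj x y := H.Adj x y ∧ f x = f y
  symm := ⟨fun _ _ h => ⟨h.1.symm, h.2.symm⟩⟩
  loopless := ⟨fun x h => H.loopless.irrefl x h.1⟩

/-- The quotient graph obtained from a labeled graph by contracting every
(maximal) connected set of equally labeled nodes (i.e. every label component)
into a single node. -/
def quotGraph {N L : Type*} (H : SimpleGraph N) (f : N → L) :
    SimpleGraph (sameLabelSub H f).ConnectedComponent where
  Adj c d := c ≠ d ∧ ∃ a b, (sameLabelSub H f).connectedComponentMk a = c ∧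
      (sameLabelSub H f).connectedComponentMk b = d ∧ H.Adj a b
  symm := ⟨by
    rintro c d ⟨hne, a, b, ha, hb, hab⟩
    exact ⟨hne.symm, b, a, hb, ha, hab.symm⟩⟩
  loopless := ⟨fun c h => h.1 rfl⟩

/-- The common label of a label component. -/
def quotLabel {N L : Type*} (H : SimpleGraph N) (f : N → L) :
    (sameLabelSub H f).ConnectedComponent → L :=
  SimpleGraph.ConnectedComponent.lift f (by
    intro v w p hp
    clear hp
    induction p with
    | nil => rfl
    | cons h _ ih => exact (show H.Adj _ _ ∧ f _ = f _ from h).2.trans ih)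

/-- The label of a coloring: its restriction to the terminal set `T`. -/
def csgLabelFun {W : Type*} (G : SimpleGraph W) (k : ℕ) (T : Set W) :
    {α : W → Fin k // IsColoring G k α} → (T → Fin k) :=
  fun α t => α.1 t.1

/-- The node set of the contracted solution graph: the label components. -/
abbrev CSGNode {W : Type*} (G : SimpleGraph W) (k : ℕ) (T : Set W) :=
  (sameLabelSub (colorGraph G k) (csgLabelFun G k T)).ConnectedComponent

/-- The contracted solution graph `C^c_k(G,T)`. -/
def CSG {W : Type*} (G : SimpleGraph W) (k : ℕ) (T : Set W) : SimpleGraph (CSGNode G k T) :=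
  quotGraph (colorGraph G k) (csgLabelFun G k T)

/-- The `γ`-node of the contracted solution graph: the label component containing `γ`. -/
def csgNode {W : Type*} (G : SimpleGraph W) (k : ℕ) (T : Set W)
    (γ : {α : W → Fin k // IsColoring G k α}) : CSGNode G k T :=
  (sameLabelSub (colorGraph G k) (csgLabelFun G k T)).connectedComponentMk γ

/-- The label of a node of the contracted solution graph: the common restriction
to `T` of its colorings. -/
def csgLabel {W : Type*} (G : SimpleGraph W) (k : ℕ) (T : Set W) :
    CSGNode G k T → (T → Fin k) :=
  quotLabel (colorGraph G k) (csgLabelFun G k T)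

/-- The restriction of a proper coloring to an induced subgraph. -/
def restrictColoring {W : Type*} (G : SimpleGraph W) (k : ℕ) (S : Set W)
    (γ : {α : W → Fin k // IsColoring G k α}) :
    {α : S → Fin k // IsColoring (G.induce S) k α} :=
  ⟨fun u => γ.1 u.1, fun u w h => γ.2 u.1 w.1 h⟩

/-- A graph is chordal if it contains no induced cycle of length greater than 3. -/
def Chordal {W : Type*} (G : SimpleGraph W) : Prop :=
  ∀ n : ℕ, 4 ≤ n → IsEmpty (SimpleGraph.cycleGraph n ↪g G)

/-- `S` is a vertex cut: `G - S` is disconnected. -/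
def IsVertexCut {W : Type*} (G : SimpleGraph W) (S : Set W) : Prop :=
  ¬ (G.induce Sᶜ).Preconnected

/-- `G` is `l`-connected. -/
def LConnected {W : Type*} (G : SimpleGraph W) (l : ℕ) : Prop :=
  G.Connected ∧ l + 1 ≤ Nat.card W ∧ ∀ S : Set W, IsVertexCut G S → l ≤ S.ncard

/-- A labeled graph `(H,ℓ)`, whose labels are `k`-colorings of the complete graph
on a vertex (type) `S`, is an `(|S|,k)`-color-complete graph. -/
def IsColorComplete {N S : Type*} (k : ℕ) (H : SimpleGraph N) (ℓ : N → S → Fin k) : Prop :=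
  (∀ x, Function.Injective (ℓ x)) ∧
  (∀ f : S → Fin k, Function.Injective f → ∃! x, ℓ x = f) ∧
  (∀ x y, H.Adj x y ↔ ∃! s, ℓ x s ≠ ℓ y s)

/-- The injective neighborhood property. -/
def INP {N L : Type*} (H : SimpleGraph N) (ℓ : N → L) : Prop :=
  ∀ u v w : N, H.Adj u v → H.Adj u w → v ≠ w → ℓ v ≠ ℓ w

/-- The weight `w(P)` of a walk `P` in a labeled graph: the sum over the vertices `x`
of `P` of the number of colors used by labels of neighbors of `x` in `P` but not by
the label of `x`. -/
noncomputable def walkWeight {N S : Type*} {k : ℕ} {G : SimpleGraph N} (ℓ : N → S → Fin k)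
    {a b : N} (P : G.Walk a b) : ℕ :=
  letI := Classical.decEq N
  ∑ x ∈ P.support.toFinset,
    ((⋃ y ∈ P.toSubgraph.neighborSet x, Set.range (ℓ y)) \ Set.range (ℓ x)).ncard

/-- The terminal set `T`, viewed as a set of vertices of the induced subgraph on `Vi`. -/
def Tsub {V : Type*} (Vi T : Set V) : Set ↥Vi := {u | u.1 ∈ T}

/-!
A proper coloring of `G` is a pair of proper colorings of `G[V₁]` and `G[V₂]` that agree on
`T = V₁ ∩ V₂`, and a recoloring step of `G` is a recoloring step of one of the two sides. So
restriction is a label-preserving homomorphism from `C^c_k(G,T)` to both `C^c_k(G[Vᵢ],T)`, and a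
node of `C^c_k(G,T)` is determined by its two restrictions: recolor on the `V₁` side first, then
on the `V₂` side.

If `C^c_k(G[V₁],T)` is color-complete, each label occurs at exactly one of its nodes, which makes
the restriction to `V₂` bijective (surjective because `T` is a clique), and an edge on the `V₂`
side lifts because the nodes with the same labels on the `V₁` side are adjacent too.

If both sides have the INP, two neighbours of a node with equal labels have equal restrictions
on both sides, hence coincide. So restriction to `V₁` never identifies two neighbours of a node:
it maps paths to walks without backtracking, which are paths in the forest `C^c_k(G[V₁],T)`, and
the image of a cycle would give two paths between the same nodes.
-/

namespace SimpleGraph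

variable {N N' : Type*} {H : SimpleGraph N} {H' : SimpleGraph N'}

lemma Walk.IsPath.isChain_ne_edges_map (f : H →g H')
    (hf : ∀ ⦃a b c⦄, H.Adj b a → H.Adj b c → a ≠ c → f a ≠ f c) :
    ∀ {u v : N} {p : H.Walk u v}, p.IsPath → List.IsChain (· ≠ ·) (p.map f).edges
  | _, _, .nil, _ => by simp
  | _, _, .cons _ .nil, _ => by simp
  | u, _, .cons hab (.cons (v := c) hbc q), hp => by
    have hac : u ≠ c := by
      rintro rfl
      exact ((Walk.cons_isPath_iff _ _).1 hp).2 (by simp)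
    simp only [Walk.map_cons, Walk.edges_cons]
    refine List.IsChain.cons_cons ?_ ?_
    · intro he
      obtain ⟨h₁, h₂⟩ | h := by simpa using he
      · exact hf hab.symm hbc hac (h₁.trans h₂)
      · exact hf hab.symm hbc hac h
    · simpa using isChain_ne_edges_map f hf hp.of_cons

lemma IsAcyclic.of_locallyInjective (f : H →g H')
    (hf : ∀ ⦃a b c⦄, H.Adj b a → H.Adj b c → a ≠ c → f a ≠ f c) (h : H'.IsAcyclic) :
    H.IsAcyclic := by
  rintro v (_ | ⟨hvb, q⟩) hc
  · exact hc.not_nil Walk.Nil.nil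
  rw [Walk.cons_isCycle_iff] at hc
  cases q with
  | nil => exact hvb.ne rfl
  | @cons _ c _ hbc q =>
    have hcv : c ≠ v := by
      rintro rfl
      obtain rfl := (Walk.isPath_iff_nil.1 hc.1.of_cons).eq_nil
      exact hc.2 (by simp [Sym2.eq_swap])
    -- the image of the path `b → c → ⋯ → v` is a path from `f b` to its neighbour `f v`, so in
    -- the forest `H'` its second vertex `f c` is `f v`
    have hp := (h.isPath_iff_isChain _).2 (hc.1.isChain_ne_edges_map f hf)
    have := h.eq_snd_of_adj_start hp (f.map_adj hvb.symm) (Walk.end_mem_support _)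
    exact hf hvb.symm hbc hcv.symm (by simpa using this)

end SimpleGraph

section Quotient

variable {N L : Type*} {H : SimpleGraph N} {f : N → L}

lemma quotGraph_adj_mk {a b : N} (hab : H.Adj a b) (hf : f a ≠ f b) :
    (quotGraph H f).Adj ((sameLabelSub H f).connectedComponentMk a)
      ((sameLabelSub H f).connectedComponentMk b) :=
  ⟨fun h => hf (congrArg (quotLabel H f) h), a, b, rfl, rfl, hab⟩

lemma exists_adj_of_quotGraph_adj {c d : (sameLabelSub H f).ConnectedComponent}
    (h : (quotGraph H f).Adj c d) :
    ∃ a b, (sameLabelSub H f).connectedComponentMk a = c ∧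
      (sameLabelSub H f).connectedComponentMk b = d ∧ H.Adj a b ∧ f a ≠ f b := by
  obtain ⟨hne, a, b, rfl, rfl, hab⟩ := h
  exact ⟨a, b, rfl, rfl, hab, fun he => hne (ConnectedComponent.sound (Adj.reachable ⟨hab, he⟩))⟩

end Quotient

lemma existsUnique_subtype_ne_iff {W X : Type*} {S : Set W} {φ ψ : W → X}
    (h : ∀ v ∉ S, φ v = ψ v) : (∃! s : S, φ s ≠ ψ s) ↔ ∃! v, φ v ≠ ψ v := by
  have hS : ∀ v, φ v ≠ ψ v → v ∈ S := fun v hv => by_contra fun hvS => hv (h v hvS)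
  constructor
  · rintro ⟨s, hs, huniq⟩
    exact ⟨s, hs, fun v hv => congrArg Subtype.val (huniq ⟨v, hS v hv⟩ hv)⟩
  · rintro ⟨v, hv, huniq⟩
    exact ⟨⟨v, hS v hv⟩, hv, fun s hs => Subtype.ext (huniq s hs)⟩

lemma IsColorComplete.injective {N S : Type*} {k : ℕ} {H : SimpleGraph N} {ℓ : N → S → Fin k}
    (hcc : IsColorComplete k H ℓ) : Function.Injective ℓ :=
  fun x _ hxy => (hcc.2.1 (ℓ x) (hcc.1 x)).unique rfl hxy.symm

abbrev Colorings {W : Type*} (G : SimpleGraph W) (k : ℕ) := {α : W → Fin k // IsColoring G k α}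

abbrev labelGraph {W : Type*} (G : SimpleGraph W) (k : ℕ) (T : Set W) :
    SimpleGraph (Colorings G k) :=
  sameLabelSub (colorGraph G k) (csgLabelFun G k T)

section Projection

variable {W : Type*} {G : SimpleGraph W} {k : ℕ} {T : Set W}

lemma csgNode_restrictColoring_eq_of_adj (A : Set W) {γ δ : Colorings G k}
    (h : (labelGraph G k T).Adj γ δ) :
    csgNode (G.induce A) k (Tsub A T) (restrictColoring G k A γ) =
      csgNode (G.induce A) k (Tsub A T) (restrictColoring G k A δ) := by
  obtain ⟨⟨w, hw, huniq⟩, hlab⟩ := h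
  by_cases hwA : w ∈ A
  · refine ConnectedComponent.sound (Adj.reachable ⟨?_, ?_⟩)
    · refine (existsUnique_subtype_ne_iff (S := A) (φ := γ.1) (ψ := δ.1) ?_).2 ⟨w, hw, huniq⟩
      exact fun v hvA => by_contra fun hv => hvA (huniq v hv ▸ hwA)
    · exact funext fun t => congrFun hlab ⟨t.1.1, t.2⟩
  · congr 1
    exact Subtype.ext (funext fun u => by_contra fun hu => hwA (huniq u.1 hu ▸ u.2))

lemma csgNode_restrictColoring_eq_of_reachable (A : Set W) {γ δ : Colorings G k}
    (h : (labelGraph G k T).Reachable γ δ) :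
    csgNode (G.induce A) k (Tsub A T) (restrictColoring G k A γ) =
      csgNode (G.induce A) k (Tsub A T) (restrictColoring G k A δ) := by
  obtain ⟨p⟩ := h
  induction p with
  | nil => rfl
  | cons h _ ih => exact (csgNode_restrictColoring_eq_of_adj A h).trans ih

def csgProj (A : Set W) : CSGNode G k T → CSGNode (G.induce A) k (Tsub A T) :=
  ConnectedComponent.lift (fun γ => csgNode (G.induce A) k (Tsub A T) (restrictColoring G k A γ))
    fun _ _ p _ => csgNode_restrictColoring_eq_of_reachable A p.reachable

lemma csgProj_csgNode (A : Set W) (γ : Colorings G k) :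
    csgProj A (csgNode G k T γ) = csgNode (G.induce A) k (Tsub A T) (restrictColoring G k A γ) :=
  rfl

lemma csgLabel_csgProj (A : Set W) (c : CSGNode G k T) (s : Tsub A T) :
    csgLabel (G.induce A) k (Tsub A T) (csgProj A c) s = csgLabel G k T c ⟨s.1.1, s.2⟩ := by
  induction c using ConnectedComponent.ind
  rfl

lemma csgLabel_csgProj_eq_iff {A : Set W} (hA : T ⊆ A) {c d : CSGNode G k T} :
    csgLabel (G.induce A) k (Tsub A T) (csgProj A c) =
        csgLabel (G.induce A) k (Tsub A T) (csgProj A d) ↔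
      csgLabel G k T c = csgLabel G k T d := by
  constructor
  · intro h
    funext t
    simpa only [csgLabel_csgProj] using congrFun h ⟨⟨t.1, hA t.2⟩, t.2⟩
  · intro h
    funext s
    simp only [csgLabel_csgProj, h]

lemma csgLabel_of_csgNode_eq_csgProj {A : Set W} {c : CSGNode G k T}
    {α : Colorings (G.induce A) k} (hα : csgNode (G.induce A) k (Tsub A T) α = csgProj A c)
    (t : T) (htA : t.1 ∈ A) : csgLabel G k T c t = α.1 ⟨t, htA⟩ := by
  rw [← csgLabel_csgProj A c ⟨⟨t, htA⟩, t.2⟩, ← hα]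
  rfl

lemma csgProj_adj {A : Set W} (hA : T ⊆ A) {c d : CSGNode G k T} (h : (CSG G k T).Adj c d) :
    (CSG (G.induce A) k (Tsub A T)).Adj (csgProj A c) (csgProj A d) := by
  obtain ⟨γ, δ, rfl, rfl, hγδ, hlab⟩ := exists_adj_of_quotGraph_adj h
  obtain ⟨t, ht⟩ := Function.ne_iff.mp hlab
  refine quotGraph_adj_mk ?_ fun he => ht (congrFun he ⟨⟨t.1, hA t.2⟩, t.2⟩)
  refine (existsUnique_subtype_ne_iff (S := A) (φ := γ.1) (ψ := δ.1) ?_).2 hγδ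
  exact fun v hvA => by_contra fun hv => hvA (hγδ.unique hv ht ▸ hA t.2)

end Projection

section Glue

variable {V X : Type*} {A B : Set V}

def Agrees (α : A → X) (β : B → X) : Prop :=
  ∀ (t : V) (hA : t ∈ A) (hB : t ∈ B), α ⟨t, hA⟩ = β ⟨t, hB⟩

lemma Agrees.symm {α : A → X} {β : B → X} (h : Agrees α β) : Agrees β α :=
  fun t hB hA => (h t hA hB).symm

open Classical in
noncomputable def glue (hAB : A ∪ B = Set.univ) (α : A → X) (β : B → X) : V → X := fun u =>
  if h : u ∈ A then α ⟨u, h⟩ else β ⟨u, (Set.eq_univ_iff_forall.1 hAB u).resolve_left h⟩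

variable (hAB : A ∪ B = Set.univ) {α : A → X} {β : B → X}

lemma glue_of_mem_left {u : V} (h : u ∈ A) : glue hAB α β u = α ⟨u, h⟩ := dif_pos h

lemma glue_of_not_mem_left {u : V} (h : u ∉ A) (hB : u ∈ B) : glue hAB α β u = β ⟨u, hB⟩ :=
  dif_neg h

lemma glue_of_mem_right (hαβ : Agrees α β) {u : V} (h : u ∈ B) : glue hAB α β u = β ⟨u, h⟩ := by
  by_cases hA : u ∈ A
  · rw [glue_of_mem_left hAB hA, hαβ u hA h]
  · exact glue_of_not_mem_left hAB hA h

lemma glue_comm (hαβ : Agrees α β) : glue (Set.union_comm A B ▸ hAB) β α = glue hAB α β := by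
  funext u
  by_cases hB : u ∈ B
  · rw [glue_of_mem_left _ hB, glue_of_mem_right hAB hαβ hB]
  · have hA : u ∈ A := (Set.eq_univ_iff_forall.1 hAB u).resolve_right hB
    rw [glue_of_not_mem_left _ hB hA, glue_of_mem_left hAB hA]

lemma existsUnique_glue_ne {α' : A → X} {β' : B → X} (hα : ∃! a, α a ≠ α' a)
    (hβ : ∀ b : B, b.1 ∉ A → β b = β' b) : ∃! v, glue hAB α β v ≠ glue hAB α' β' v := by
  refine (existsUnique_subtype_ne_iff (S := A) fun v hv => ?_).1 ?_
  · have hB : v ∈ B := (Set.eq_univ_iff_forall.1 hAB v).resolve_left hv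
    rw [glue_of_not_mem_left hAB hv hB, glue_of_not_mem_left hAB hv hB, hβ ⟨v, hB⟩ hv]
  · simpa only [glue_of_mem_left hAB (Subtype.prop _)] using hα

end Glue

/-- `(G, T)` is the join of `(G[A], T)` and `(G[B], T)`. -/
structure IsJoin {V : Type*} (G : SimpleGraph V) (T A B : Set V) : Prop where
  inter_eq : A ∩ B = T
  union_eq : A ∪ B = Set.univ
  adj_mem : ∀ u w, G.Adj u w → (u ∈ A ∧ w ∈ A) ∨ (u ∈ B ∧ w ∈ B)

namespace IsJoin

variable {V : Type*} {G : SimpleGraph V} {k : ℕ} {T A B : Set V} (hJ : IsJoin G T A B)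
include hJ

lemma symm : IsJoin G T B A :=
  ⟨Set.inter_comm A B ▸ hJ.inter_eq, Set.union_comm A B ▸ hJ.union_eq,
    fun u w h => (hJ.adj_mem u w h).symm⟩

lemma subset_left : T ⊆ A := hJ.inter_eq ▸ Set.inter_subset_left

lemma subset_right : T ⊆ B := hJ.inter_eq ▸ Set.inter_subset_right

lemma mem_of_mem_of_mem {t : V} (hA : t ∈ A) (hB : t ∈ B) : t ∈ T := hJ.inter_eq ▸ ⟨hA, hB⟩

lemma isColoring_glue {α : A → Fin k} {β : B → Fin k} (hαβ : Agrees α β)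
    (hα : IsColoring (G.induce A) k α) (hβ : IsColoring (G.induce B) k β) :
    IsColoring G k (glue hJ.union_eq α β) := by
  intro u w huw
  rcases hJ.adj_mem u w huw with ⟨hu, hw⟩ | ⟨hu, hw⟩
  · rw [glue_of_mem_left _ hu, glue_of_mem_left _ hw]
    exact hα ⟨u, hu⟩ ⟨w, hw⟩ huw
  · rw [glue_of_mem_right _ hαβ hu, glue_of_mem_right _ hαβ hw]
    exact hβ ⟨u, hu⟩ ⟨w, hw⟩ huw

noncomputable def glueColoring (α : Colorings (G.induce A) k) (β : Colorings (G.induce B) k)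
    (hαβ : Agrees α.1 β.1) : Colorings G k :=
  ⟨glue hJ.union_eq α.1 β.1, hJ.isColoring_glue hαβ α.2 β.2⟩

section

variable {α : Colorings (G.induce A) k} {β : Colorings (G.induce B) k}

lemma restrictColoring_glueColoring_left (hαβ : Agrees α.1 β.1) :
    restrictColoring G k A (hJ.glueColoring α β hαβ) = α :=
  Subtype.ext (funext fun u => glue_of_mem_left hJ.union_eq u.2)

lemma restrictColoring_glueColoring_right (hαβ : Agrees α.1 β.1) :
    restrictColoring G k B (hJ.glueColoring α β hαβ) = β :=
  Subtype.ext (funext fun u => glue_of_mem_right hJ.union_eq hαβ u.2)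

lemma glueColoring_restrictColoring (γ : Colorings G k) :
    hJ.glueColoring (restrictColoring G k A γ) (restrictColoring G k B γ) (fun _ _ _ => rfl) = γ :=
  Subtype.ext (funext fun u => by
    by_cases hA : u ∈ A
    · exact glue_of_mem_left hJ.union_eq hA
    · exact glue_of_not_mem_left hJ.union_eq hA
        ((Set.eq_univ_iff_forall.1 hJ.union_eq u).resolve_left hA))

lemma glueColoring_symm (hαβ : Agrees α.1 β.1) :
    hJ.symm.glueColoring β α hαβ.symm = hJ.glueColoring α β hαβ :=
  Subtype.ext (glue_comm hJ.union_eq hαβ)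

end

lemma agrees_of_csgLabelFun_eq {α α' : Colorings (G.induce A) k} {β : B → Fin k}
    (h : csgLabelFun (G.induce A) k (Tsub A T) α = csgLabelFun (G.induce A) k (Tsub A T) α')
    (hαβ : Agrees α.1 β) : Agrees α'.1 β := fun t hA hB =>
  (congrFun h ⟨⟨t, hA⟩, hJ.mem_of_mem_of_mem hA hB⟩).symm.trans (hαβ t hA hB)

lemma labelGraph_adj_glueColoring_left {α α' : Colorings (G.induce A) k}
    {β : Colorings (G.induce B) k} (h : (labelGraph (G.induce A) k (Tsub A T)).Adj α α')
    (hαβ : Agrees α.1 β.1) (hα'β : Agrees α'.1 β.1) :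
    (labelGraph G k T).Adj (hJ.glueColoring α β hαβ) (hJ.glueColoring α' β hα'β) := by
  refine ⟨existsUnique_glue_ne hJ.union_eq h.1 fun _ _ => rfl, funext fun t => ?_⟩
  have htA := hJ.subset_left t.2
  exact (glue_of_mem_left hJ.union_eq htA).trans <|
    (congrFun h.2 ⟨⟨t, htA⟩, t.2⟩).trans (glue_of_mem_left hJ.union_eq htA).symm

lemma reachable_glueColoring_left {α α' : Colorings (G.induce A) k}
    {β : Colorings (G.induce B) k} (h : (labelGraph (G.induce A) k (Tsub A T)).Reachable α α')
    (hαβ : Agrees α.1 β.1) (hα'β : Agrees α'.1 β.1) :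
    (labelGraph G k T).Reachable (hJ.glueColoring α β hαβ) (hJ.glueColoring α' β hα'β) := by
  obtain ⟨p⟩ := h
  induction p with
  | nil => rfl
  | cons hadj _ ih =>
    have hα₁β := hJ.agrees_of_csgLabelFun_eq hadj.2 hαβ
    exact (hJ.labelGraph_adj_glueColoring_left hadj hαβ hα₁β).reachable.trans (ih hα₁β hα'β)

lemma csgNode_eq_of_restrictColoring {γ δ : Colorings G k}
    (hA : csgNode (G.induce A) k (Tsub A T) (restrictColoring G k A γ) =
      csgNode (G.induce A) k (Tsub A T) (restrictColoring G k A δ))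
    (hB : csgNode (G.induce B) k (Tsub B T) (restrictColoring G k B γ) =
      csgNode (G.induce B) k (Tsub B T) (restrictColoring G k B δ)) :
    csgNode G k T γ = csgNode G k T δ := by
  have hδγ : Agrees (restrictColoring G k A δ).1 (restrictColoring G k B γ).1 :=
    hJ.agrees_of_csgLabelFun_eq (congrArg (csgLabel _ k _) hA) fun _ _ _ => rfl
  -- pass from `γ` to `δ` through the coloring that agrees with `δ` on `A` and with `γ` on `B`
  have hγ := hJ.reachable_glueColoring_left (ConnectedComponent.exact hA) (fun _ _ _ => rfl) hδγ
  have hδ := hJ.symm.reachable_glueColoring_left (ConnectedComponent.exact hB) hδγ.symm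
    (fun _ _ _ => rfl)
  rw [glueColoring_restrictColoring, ← hJ.glueColoring_symm hδγ] at hγ
  rw [hJ.symm.glueColoring_restrictColoring] at hδ
  exact ConnectedComponent.sound (hγ.trans hδ)

lemma eq_of_csgProj_eq {c d : CSGNode G k T} (hA : csgProj A c = csgProj A d)
    (hB : csgProj B c = csgProj B d) : c = d := by
  induction c, d using ConnectedComponent.ind₂ with
  | _ γ δ => exact hJ.csgNode_eq_of_restrictColoring hA hB

lemma inp_csg
    (hinpA : INP (CSG (G.induce A) k (Tsub A T)) (csgLabel (G.induce A) k (Tsub A T)))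
    (hinpB : INP (CSG (G.induce B) k (Tsub B T)) (csgLabel (G.induce B) k (Tsub B T))) :
    INP (CSG G k T) (csgLabel G k T) := by
  intro u v w huv huw hvw hlab
  refine hvw (hJ.eq_of_csgProj_eq (by_contra fun hA => ?_) (by_contra fun hB => ?_))
  · exact hinpA _ _ _ (csgProj_adj hJ.subset_left huv) (csgProj_adj hJ.subset_left huw) hA
      ((csgLabel_csgProj_eq_iff hJ.subset_left).2 hlab)
  · exact hinpB _ _ _ (csgProj_adj hJ.subset_right huv) (csgProj_adj hJ.subset_right huw) hB
      ((csgLabel_csgProj_eq_iff hJ.subset_right).2 hlab)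

lemma isAcyclic_csg (hacA : (CSG (G.induce A) k (Tsub A T)).IsAcyclic)
    (hinpA : INP (CSG (G.induce A) k (Tsub A T)) (csgLabel (G.induce A) k (Tsub A T)))
    (hinpB : INP (CSG (G.induce B) k (Tsub B T)) (csgLabel (G.induce B) k (Tsub B T))) :
    (CSG G k T).IsAcyclic :=
  hacA.of_locallyInjective ⟨csgProj A, csgProj_adj hJ.subset_left⟩
    fun _ _ _ hba hbc hac hproj => hJ.inp_csg hinpA hinpB _ _ _ hba hbc hac
      ((csgLabel_csgProj_eq_iff hJ.subset_left).1 (congrArg _ hproj))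

lemma agrees_of_csgNode_eq_csgProj {c : CSGNode G k T} {α : Colorings (G.induce A) k}
    {β : Colorings (G.induce B) k} (hα : csgNode (G.induce A) k (Tsub A T) α = csgProj A c)
    (hβ : csgNode (G.induce B) k (Tsub B T) β = csgProj B c) : Agrees α.1 β.1 := fun t htA htB =>
  have ht : t ∈ T := hJ.mem_of_mem_of_mem htA htB
  (csgLabel_of_csgNode_eq_csgProj hα ⟨t, ht⟩ htA).symm.trans
    (csgLabel_of_csgNode_eq_csgProj hβ ⟨t, ht⟩ htB)

lemma csgNode_glueColoring {c : CSGNode G k T} {α : Colorings (G.induce A) k}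
    {β : Colorings (G.induce B) k} (hα : csgNode (G.induce A) k (Tsub A T) α = csgProj A c)
    (hβ : csgNode (G.induce B) k (Tsub B T) β = csgProj B c) :
    csgNode G k T (hJ.glueColoring α β (hJ.agrees_of_csgNode_eq_csgProj hα hβ)) = c := by
  refine hJ.eq_of_csgProj_eq ?_ ?_
  · rw [csgProj_csgNode, restrictColoring_glueColoring_left, hα]
  · rw [csgProj_csgNode, restrictColoring_glueColoring_right, hβ]

section ColorComplete

variable (hcc : IsColorComplete k (CSG (G.induce A) k (Tsub A T))
  (csgLabel (G.induce A) k (Tsub A T)))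
include hcc

lemma csgProj_right_injective : Function.Injective (csgProj B : CSGNode G k T → _) := by
  intro c d h
  have hlab := (csgLabel_csgProj_eq_iff hJ.subset_right).1 (congrArg (csgLabel _ k _) h)
  exact hJ.eq_of_csgProj_eq (hcc.injective ((csgLabel_csgProj_eq_iff hJ.subset_left).2 hlab)) h

lemma csgProj_right_surjective (hT : G.IsClique T) :
    Function.Surjective (csgProj B : CSGNode G k T → _) := by
  intro b
  induction b using ConnectedComponent.ind with
  | _ β =>
  let f : Tsub A T → Fin k := fun s => β.1 ⟨s.1.1, hJ.subset_right s.2⟩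
  have hf : Function.Injective f := fun s s' hss' => by_contra fun hne =>
    β.2 ⟨s.1.1, hJ.subset_right s.2⟩ ⟨s'.1.1, hJ.subset_right s'.2⟩
      (hT s.2 s'.2 fun h => hne (Subtype.ext (Subtype.ext h))) hss'
  obtain ⟨x, hx, -⟩ := hcc.2.1 f hf
  obtain ⟨α, rfl⟩ := x.exists_rep
  have hαβ : Agrees α.1 β.1 := fun t htA htB =>
    congrFun hx ⟨⟨t, htA⟩, hJ.mem_of_mem_of_mem htA htB⟩
  exact ⟨csgNode G k T (hJ.glueColoring α β hαβ),
    congrArg _ (hJ.restrictColoring_glueColoring_right hαβ)⟩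

lemma adj_of_csgProj_right_adj {c d : CSGNode G k T}
    (h : (CSG (G.induce B) k (Tsub B T)).Adj (csgProj B c) (csgProj B d)) :
    (CSG G k T).Adj c d := by
  obtain ⟨β, β', hβ, hβ', hββ', hlab⟩ := exists_adj_of_quotGraph_adj h
  obtain ⟨s, hs⟩ := Function.ne_iff.mp hlab
  have hsT : s.1.1 ∈ T := s.2
  have hsA : s.1.1 ∈ A := hJ.subset_left hsT
  have hlabel : ∀ (e : CSGNode G k T) (γ : Colorings (G.induce B) k),
      csgNode _ k _ γ = csgProj B e → ∀ r : Tsub A T,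
        csgLabel _ k _ (csgProj A e) r = γ.1 ⟨r.1.1, hJ.subset_right r.2⟩ := fun e γ hγ r =>
    (csgLabel_csgProj A e r).trans (csgLabel_of_csgNode_eq_csgProj hγ _ _)
  have hadjA : (CSG (G.induce A) k (Tsub A T)).Adj (csgProj A c) (csgProj A d) := by
    refine (hcc.2.2 _ _).2 ⟨⟨⟨s.1.1, hsA⟩, hsT⟩, ?_, fun r hr => ?_⟩
    · exact fun he => hs ((hlabel c β hβ _).symm.trans (he.trans (hlabel d β' hβ' _)))
    · have hr' : β.1 ⟨r.1.1, _⟩ ≠ β'.1 ⟨r.1.1, _⟩ := fun he =>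
        hr ((hlabel c β hβ r).trans (he.trans (hlabel d β' hβ' r).symm))
      have hrs := congrArg Subtype.val (hββ'.unique hr' hs)
      exact Subtype.ext (Subtype.ext hrs)
  obtain ⟨α, α', hα, hα', hαα', -⟩ := exists_adj_of_quotGraph_adj hadjA
  rw [← hJ.csgNode_glueColoring hα hβ, ← hJ.csgNode_glueColoring hα' hβ']
  refine quotGraph_adj_mk ?_ fun he => hs ?_
  · -- `β` and `β'` differ only at `s ∈ T ⊆ A`
    refine existsUnique_glue_ne hJ.union_eq hαα' fun b hb => by_contra fun hne => hb ?_
    exact congrArg Subtype.val (hββ'.unique hne hs) ▸ hsA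
  · have : glue hJ.union_eq α.1 β.1 s.1.1 = glue hJ.union_eq α'.1 β'.1 s.1.1 :=
      congrFun he ⟨s.1.1, s.2⟩
    rwa [glue_of_mem_right _ (hJ.agrees_of_csgNode_eq_csgProj hα hβ) s.1.2,
      glue_of_mem_right _ (hJ.agrees_of_csgNode_eq_csgProj hα' hβ') s.1.2] at this

lemma exists_csgIso_of_isColorComplete (hT : G.IsClique T) :
    ∃ φ : CSG G k T ≃g CSG (G.induce B) k (Tsub B T),
      ∀ (x : CSGNode G k T) (t : V) (ht : t ∈ T),
        csgLabel G k T x ⟨t, ht⟩ =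
          csgLabel (G.induce B) k (Tsub B T) (φ x) ⟨⟨t, hJ.subset_right ht⟩, ht⟩ :=
  ⟨⟨Equiv.ofBijective _ ⟨hJ.csgProj_right_injective hcc, hJ.csgProj_right_surjective hcc hT⟩,
    ⟨hJ.adj_of_csgProj_right_adj hcc, csgProj_adj hJ.subset_right⟩⟩,
    fun x t ht => (csgLabel_csgProj B x ⟨⟨t, hJ.subset_right ht⟩, ht⟩).symm⟩

end ColorComplete

end IsJoin

theorem statement_13_general {V : Type} (G : SimpleGraph V) (k : ℕ)
    (T V₁ V₂ : Set V) (hT : G.IsClique T) (h1 : T ⊆ V₁) (h2 : T ⊆ V₂)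
    (hcap : V₁ ∩ V₂ = T) (hcup : V₁ ∪ V₂ = Set.univ)
    (hedge : ∀ u w : V, G.Adj u w → (u ∈ V₁ ∧ w ∈ V₁) ∨ (u ∈ V₂ ∧ w ∈ V₂)) :
    (IsColorComplete k (CSG (G.induce V₁) k (Tsub V₁ T))
        (csgLabel (G.induce V₁) k (Tsub V₁ T)) →
      ∃ φ : CSG G k T ≃g CSG (G.induce V₂) k (Tsub V₂ T),
        ∀ (x : CSGNode G k T) (t : V) (ht : t ∈ T),
          csgLabel G k T x ⟨t, ht⟩ =
            csgLabel (G.induce V₂) k (Tsub V₂ T) (φ x) ⟨⟨t, h2 ht⟩, ht⟩) ∧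
    (IsColorComplete k (CSG (G.induce V₂) k (Tsub V₂ T))
        (csgLabel (G.induce V₂) k (Tsub V₂ T)) →
      ∃ φ : CSG G k T ≃g CSG (G.induce V₁) k (Tsub V₁ T),
        ∀ (x : CSGNode G k T) (t : V) (ht : t ∈ T),
          csgLabel G k T x ⟨t, ht⟩ =
            csgLabel (G.induce V₁) k (Tsub V₁ T) (φ x) ⟨⟨t, h1 ht⟩, ht⟩) ∧
    ((IsAcyclic (CSG (G.induce V₁) k (Tsub V₁ T)) ∧
        INP (CSG (G.induce V₁) k (Tsub V₁ T)) (csgLabel (G.induce V₁) k (Tsub V₁ T)) ∧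
        IsAcyclic (CSG (G.induce V₂) k (Tsub V₂ T)) ∧
        INP (CSG (G.induce V₂) k (Tsub V₂ T)) (csgLabel (G.induce V₂) k (Tsub V₂ T))) →
      (IsAcyclic (CSG G k T) ∧ INP (CSG G k T) (csgLabel G k T))) := by
  have hJ : IsJoin G T V₁ V₂ := ⟨hcap, hcup, hedge⟩
  refine ⟨fun hcc => hJ.exists_csgIso_of_isColorComplete hcc hT,
    fun hcc => hJ.symm.exists_csgIso_of_isColorComplete hcc hT, ?_⟩
  rintro ⟨hac₁, hinp₁, -, hinp₂⟩
  exact ⟨hJ.isAcyclic_csg hac₁ hinp₁ hinp₂, hJ.inp_csg hinp₁ hinp₂⟩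

/-- the join operation preserves the invariant: if one of `C^c_k(G₁,T)`,
`C^c_k(G₂,T)` is an `(|T|,k)`-color-complete graph, then `C^c_k(G,T)` equals the other
graph (up to label-preserving isomorphism); if both are forests satisfying the INP,
then so is `C^c_k(G,T)`. -/
theorem statement_13 {V : Type} [Fintype V] [DecidableEq V] (G : SimpleGraph V)
    (k : ℕ) (hk : 1 ≤ k) (hchord : Chordal G)
    (hcol : ∃ α : V → Fin k, IsColoring G k α)
    (T V₁ V₂ : Set V) (hT : G.IsClique T) (h1 : T ⊆ V₁) (h2 : T ⊆ V₂)
    (hcap : V₁ ∩ V₂ = T) (hcup : V₁ ∪ V₂ = Set.univ) (hne1 : V₁ ≠ T) (hne2 : V₂ ≠ T)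
    (hedge : ∀ u w : V, G.Adj u w → (u ∈ V₁ ∧ w ∈ V₁) ∨ (u ∈ V₂ ∧ w ∈ V₂)) :
    (IsColorComplete k (CSG (G.induce V₁) k (Tsub V₁ T))
        (csgLabel (G.induce V₁) k (Tsub V₁ T)) →
      ∃ φ : CSG G k T ≃g CSG (G.induce V₂) k (Tsub V₂ T),
        ∀ (x : CSGNode G k T) (t : V) (ht : t ∈ T),
          csgLabel G k T x ⟨t, ht⟩ =
            csgLabel (G.induce V₂) k (Tsub V₂ T) (φ x) ⟨⟨t, h2 ht⟩, ht⟩) ∧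
    (IsColorComplete k (CSG (G.induce V₂) k (Tsub V₂ T))
        (csgLabel (G.induce V₂) k (Tsub V₂ T)) →
      ∃ φ : CSG G k T ≃g CSG (G.induce V₁) k (Tsub V₁ T),
        ∀ (x : CSGNode G k T) (t : V) (ht : t ∈ T),
          csgLabel G k T x ⟨t, ht⟩ =
            csgLabel (G.induce V₁) k (Tsub V₁ T) (φ x) ⟨⟨t, h1 ht⟩, ht⟩) ∧
    ((IsAcyclic (CSG (G.induce V₁) k (Tsub V₁ T)) ∧
        INP (CSG (G.induce V₁) k (Tsub V₁ T)) (csgLabel (G.induce V₁) k (Tsub V₁ T)) ∧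
        IsAcyclic (CSG (G.induce V₂) k (Tsub V₂ T)) ∧
        INP (CSG (G.induce V₂) k (Tsub V₂ T)) (csgLabel (G.induce V₂) k (Tsub V₂ T))) →
      (IsAcyclic (CSG G k T) ∧ INP (CSG G k T) (csgLabel G k T))) :=
  statement_13_general G k T V₁ V₂ hT h1 h2 hcap hcup hedge
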